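/- Let D be an integral domain, A a D-torsion-free D-algebra, and a ∈ A. If φ : Int(D) → A is a D-algebra homomorphism with φ(X) = a, then φ(f) = f(a) in A ⊗_D K for every f ∈ Int(D); in particular such a homomorphism is unique. -/

import Mathlib

set_option linter.unusedSectionVars false
open Polynomial TensorProduct

variable (D K : Type*) [CommRing D] [IsDomain D] [Field K] [Algebra D K] [IsFractionRing D K]

/-- The ring of integer-valued polynomials `Int(D) ⊆ K[X]`. -/
noncomputable def IntD : Subalgebra D (Polynomial K) :=
  ⨅ a : D, Subalgebra.comap ((Polynomial.aeval (algebraMap D K a)).restrictScalars D)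
    (Algebra.ofId D K).range

theorem mem_IntD {f : Polynomial K} :
    f ∈ IntD D K ↔
      ∀ a : D, ∃ d : D, algebraMap D K d = Polynomial.eval (algebraMap D K a) f := by
  simp [IntD, Algebra.mem_iInf, Subalgebra.mem_comap, Algebra.ofId_apply, Algebra.mem_bot,
    Set.mem_range]

/-- `X` as an element of `Int(D)`. -/
noncomputable def Xint : IntD D K := ⟨Polynomial.X, (mem_IntD D K).mpr fun a => ⟨a, by simp⟩⟩

/-!
Every element of `Int(D)` becomes a polynomial in `X` with coefficients in `D` after multiplication
by a nonzero `d ∈ D`. A `D`-algebra homomorphism out of `Int(D)` is therefore determined, up to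
multiplication by such `d`, by its value at `X`; in a `D`-torsion-free target this pins it down.
Both `φ` followed by `A → K ⊗[D] A` and evaluation at `1 ⊗ a` are such homomorphisms into the
torsion-free `K`-vector space `K ⊗[D] A`, so they agree, and uniqueness is the same argument in `A`.
-/

namespace IntD

variable {D K}

@[simp]
theorem coe_Xint : (Xint D K : K[X]) = X := rfl

theorem coe_aeval_Xint (g : D[X]) :
    ((aeval (Xint D K) g : IntD D K) : K[X]) = g.map (algebraMap D K) := by
  change (IntD D K).val _ = _
  rw [← aeval_algHom_apply, ← aeval_map_algebraMap K]
  exact aeval_X_left_apply _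

theorem exists_smul_eq_aeval_Xint (x : IntD D K) :
    ∃ d ∈ nonZeroDivisors D, ∃ g : D[X], d • x = aeval (Xint D K) g := by
  obtain ⟨d, hd, hg⟩ := IsLocalization.integerNormalization_spec (nonZeroDivisors D) (x : K[X])
  exact ⟨d, hd, _, Subtype.ext ((coe_aeval_Xint _).trans hg).symm⟩

theorem algHom_ext {B : Type*} [Semiring B] [Algebra D B] [Module.IsTorsionFree D B]
    {χ₁ χ₂ : IntD D K →ₐ[D] B} (h : χ₁ (Xint D K) = χ₂ (Xint D K)) : χ₁ = χ₂ := by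
  ext x
  obtain ⟨d, hd, g, hg⟩ := exists_smul_eq_aeval_Xint x
  refine (isRegular_iff_eq_zero_of_mul.mpr hd).smul_right_injective B ?_
  simp only [← map_smul, hg, ← aeval_algHom_apply, h]

end IntD

theorem stmt_9 (A : Type*) [CommRing A] [Algebra D A] [NoZeroSMulDivisors D A] (a : A)
    (φ : IntD D K →ₐ[D] A) (hφ : φ (Xint D K) = a) :
    (∀ (f : Polynomial K) (hf : f ∈ IntD D K),
        (1 : K) ⊗ₜ[D] (φ ⟨f, hf⟩) = Polynomial.aeval ((1 : K) ⊗ₜ[D] a) f) ∧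
      ∀ ψ : IntD D K →ₐ[D] A, ψ (Xint D K) = a → ψ = φ := by
  have : Module.IsTorsionFree D (K ⊗[D] A) := .trans_faithfulSMul D K _
  have h_eval : (Algebra.TensorProduct.includeRight.comp φ : IntD D K →ₐ[D] K ⊗[D] A) =
      ((aeval ((1 : K) ⊗ₜ[D] a)).restrictScalars D).comp (IntD D K).val :=
    IntD.algHom_ext (by simp [hφ])
  exact ⟨fun f hf => DFunLike.congr_fun h_eval ⟨f, hf⟩,
    fun ψ hψ => IntD.algHom_ext (hψ.trans hφ.symm)⟩
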